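/- arXiv:2508.21683 — 5 statements merged into one kernel-verified Lean document; each statement's English description precedes it below -/
import Mathlib

section
/- The sum over n ≥ 0 of C_n / 4^n equals 2, where C_n = (1/(n+1)) * binom(2n, n) is the n-th Catalan number. -/
/-!
With `a n = centralBinom n / 4 ^ n` one has `a (n + 1) = (2n + 1) / (2n + 2) * a n`, and
`catalan n = centralBinom n / (n + 1)` turns this into the telescoping identity
`catalan n / 4 ^ n = 2 * (a n - a (n + 1))`. The series therefore sums to `2 * (a 0 - lim a) = 2`,
because `a n ^ 2 * (2n + 1)` is nonincreasing, hence `a n ≤ 1 / √(2n + 1) → 0`.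
-/

open Filter Topology Finset

theorem hasSum_sub_succ_of_antitone {f : ℕ → ℝ} {l : ℝ} (hf : Antitone f)
    (h : Tendsto f atTop (𝓝 l)) : HasSum (fun n ↦ f n - f (n + 1)) (f 0 - l) := by
  rw [hasSum_iff_tendsto_nat_of_nonneg fun n ↦ sub_nonneg.2 (hf n.le_succ)]
  simpa only [sum_range_sub'] using tendsto_const_nhds.sub h

namespace Nat

theorem centralBinom_succ_div_four_pow_succ (n : ℕ) :
    (centralBinom (n + 1) : ℝ) / 4 ^ (n + 1) =
      (2 * n + 1) / (2 * n + 2) * (centralBinom n / 4 ^ n) := by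
  have h : ((n : ℝ) + 1) * centralBinom (n + 1) = 2 * (2 * n + 1) * centralBinom n := by
    exact_mod_cast succ_mul_centralBinom_succ n
  field_simp
  rw [pow_succ]
  linear_combination 4 ^ n * 2 * h

theorem antitone_centralBinom_div_four_pow :
    Antitone fun n ↦ (centralBinom n : ℝ) / 4 ^ n := by
  refine antitone_nat_of_succ_le fun n ↦ ?_
  rw [centralBinom_succ_div_four_pow_succ]
  exact mul_le_of_le_one_left (by positivity) ((div_le_one (by positivity)).2 (by linarith))

theorem centralBinom_div_four_pow_sq_mul_le_one (n : ℕ) :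
    ((centralBinom n : ℝ) / 4 ^ n) ^ 2 * (2 * n + 1) ≤ 1 := by
  induction n with
  | zero => simp
  | succ n ih =>
    calc ((centralBinom (n + 1) : ℝ) / 4 ^ (n + 1)) ^ 2 * (2 * ↑(n + 1) + 1)
        = ((centralBinom n : ℝ) / 4 ^ n) ^ 2 * (2 * n + 1) *
            ((2 * n + 1) * (2 * n + 3) / (2 * n + 2) ^ 2) := by
          rw [centralBinom_succ_div_four_pow_succ]
          push_cast
          field_simp
          ring
      _ ≤ 1 * 1 := by
          gcongr
          rw [div_le_one (by positivity)]
          nlinarith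
      _ = 1 := one_mul 1

theorem tendsto_centralBinom_div_four_pow :
    Tendsto (fun n ↦ (centralBinom n : ℝ) / 4 ^ n) atTop (𝓝 0) := by
  have hlim : Tendsto (fun n : ℕ ↦ √(1 / ((n : ℝ) + 1))) atTop (𝓝 0) := by
    simpa using tendsto_one_div_add_atTop_nhds_zero_nat.sqrt
  refine squeeze_zero (fun n ↦ by positivity) (fun n ↦ ?_) hlim
  refine Real.le_sqrt_of_sq_le ?_
  rw [le_div_iff₀ (by positivity)]
  calc ((centralBinom n : ℝ) / 4 ^ n) ^ 2 * (n + 1)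
      ≤ ((centralBinom n : ℝ) / 4 ^ n) ^ 2 * (2 * n + 1) := by gcongr; linarith
    _ ≤ 1 := centralBinom_div_four_pow_sq_mul_le_one n

end Nat

theorem catalan_div_four_pow_eq_two_mul_sub (n : ℕ) :
    (catalan n : ℝ) / 4 ^ n =
      2 * ((n.centralBinom : ℝ) / 4 ^ n - (n + 1).centralBinom / 4 ^ (n + 1)) := by
  have h : ((n : ℝ) + 1) * catalan n = n.centralBinom := by
    exact_mod_cast succ_mul_catalan_eq_centralBinom n
  rw [Nat.centralBinom_succ_div_four_pow_succ, ← h]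
  field_simp
  ring

/-- The sum over `n ≥ 0` of `C_n / 4^n` equals `2`, where `C_n` is the `n`-th
Catalan number. -/
theorem catalan_tsum_div_four_pow : ∑' n : ℕ, (catalan n : ℝ) / 4 ^ n = 2 := by
  have h := (hasSum_sub_succ_of_antitone Nat.antitone_centralBinom_div_four_pow
    Nat.tendsto_centralBinom_div_four_pow).mul_left 2
  simp only [Nat.centralBinom_zero, Nat.cast_one, pow_zero, div_one, sub_zero, mul_one,
    ← catalan_div_four_pow_eq_two_mul_sub] at h
  exact h.tsum_eq
end

section
/- For every positive integer m, the alternating sum ∑_{i=0}^{m-1} (-1)^i * binom(m-i-1, i) * C_{m-i-1} equals 1, where C_k is the k-th Catalan number. -/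
/-!
The Catalan series `C(t)` satisfies `t C² - C + 1 = 0`. At `t = x(1 - x)` this quadratic factors as
`((1 - x) C - 1)(x C - 1)`, and the second factor is a unit, so `C(x(1 - x)) = 1 / (1 - x)`.
Comparing coefficients of `x^(m-1)`, after the substitution `i ↦ m - 1 - i`, gives the identity.
-/

open Finset PowerSeries

namespace PowerSeries

variable {R : Type*} [CommRing R]

theorem coeff_one_sub_X_pow (d k : ℕ) :
    coeff k ((1 - X : R⟦X⟧) ^ d) = (-1) ^ k * d.choose k := by
  have h : (1 - X : R⟦X⟧) ^ d =
      rescale (-1) (((1 + Polynomial.X) ^ d : Polynomial R) : R⟦X⟧) := by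
    simp [sub_eq_add_neg]
  rw [h, coeff_rescale, Polynomial.coeff_coe, Polynomial.coeff_one_add_X_pow]

theorem coeff_X_mul_one_sub_X_pow {d n : ℕ} (h : d ≤ n) :
    coeff n ((X * (1 - X) : R⟦X⟧) ^ d) = (-1) ^ (n - d) * d.choose (n - d) := by
  rw [mul_pow, coeff_X_pow_mul', if_pos h, coeff_one_sub_X_pow]

theorem coeff_X_mul_one_sub_X_pow_of_lt {d n : ℕ} (h : n < d) :
    coeff n ((X * (1 - X) : R⟦X⟧) ^ d) = 0 := by
  rw [mul_pow, coeff_X_pow_mul', if_neg (not_le.2 h)]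

theorem hasSubst_X_mul_one_sub_X : HasSubst (X * (1 - X) : R⟦X⟧) :=
  HasSubst.of_constantCoeff_zero' (by simp)

-- `subst` needs a ring of coefficients, so the series is moved from `ℕ⟦X⟧` to `R⟦X⟧`.
theorem map_catalanSeries_sq_mul_X_add_one :
    catalanSeries.map (Nat.castRingHom R) ^ 2 * X + 1 = catalanSeries.map (Nat.castRingHom R) := by
  simpa using congrArg (map (Nat.castRingHom R)) catalanSeries_sq_mul_X_add_one

theorem coeff_subst_X_mul_one_sub_X_map_catalanSeries (n : ℕ) :
    coeff n ((catalanSeries.map (Nat.castRingHom R)).subst (X * (1 - X) : R⟦X⟧)) =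
      ∑ d ∈ range (n + 1), (-1 : R) ^ (n - d) * d.choose (n - d) * catalan d := by
  rw [coeff_subst' hasSubst_X_mul_one_sub_X, finsum_eq_sum_of_support_subset (s := range (n + 1))]
  · refine sum_congr rfl fun d hd => ?_
    rw [coeff_map, catalanSeries_coeff, coeff_X_mul_one_sub_X_pow (mem_range_succ_iff.1 hd),
      smul_eq_mul]
    push_cast; ring
  · refine fun d hd => mem_range.2 (not_le.1 fun h => hd ?_)
    dsimp only
    rw [coeff_X_mul_one_sub_X_pow_of_lt (by omega), smul_zero]

theorem subst_X_mul_one_sub_X_map_catalanSeries :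
    (catalanSeries.map (Nat.castRingHom R)).subst (X * (1 - X) : R⟦X⟧) = mk 1 := by
  set Q := (catalanSeries.map (Nat.castRingHom R)).subst (X * (1 - X) : R⟦X⟧)
  have hQ : Q ^ 2 * (X * (1 - X)) + 1 = Q := by
    have := congrArg (substAlgHom (R := R) (hasSubst_X_mul_one_sub_X (R := R)))
      map_catalanSeries_sq_mul_X_add_one
    rwa [map_add, map_mul, map_pow, map_one, substAlgHom_X, coe_substAlgHom] at this
  have hfactor : ((1 - X) * Q - 1) * (X * Q - 1) = 0 := by linear_combination hQ
  have hunit : IsUnit (X * Q - 1) := by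
    rw [isUnit_iff_constantCoeff]; simp
  have hinv : (1 - X) * Q = 1 := sub_eq_zero.1 (hunit.mul_left_eq_zero.1 hfactor)
  linear_combination (-Q) * mk_one_mul_one_sub_eq_one R + mk 1 * hinv

end PowerSeries

theorem sum_neg_one_pow_mul_choose_mul_catalan {R : Type*} [CommRing R] (n : ℕ) :
    ∑ d ∈ range (n + 1), (-1 : R) ^ (n - d) * d.choose (n - d) * catalan d = 1 := by
  rw [← coeff_subst_X_mul_one_sub_X_map_catalanSeries, subst_X_mul_one_sub_X_map_catalanSeries,
    coeff_mk, Pi.one_apply]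

/-- For every positive integer `m`,
`∑_{i=0}^{m-1} (-1)^i * binom(m-i-1, i) * C_{m-i-1} = 1`,
where `C_k` is the `k`-th Catalan number (and `binom(a,b) = 0` when `b > a`). -/
theorem alternating_catalan_sum_eq_one (m : ℕ) (hm : 1 ≤ m) :
    ∑ i ∈ Finset.range m,
      (-1 : ℤ) ^ i * (Nat.choose (m - i - 1) i) * (catalan (m - i - 1)) = 1 := by
  obtain ⟨n, rfl⟩ : ∃ n, m = n + 1 := ⟨m - 1, by omega⟩
  rw [← sum_range_reflect]
  refine (sum_congr rfl fun i hi => ?_).trans (sum_neg_one_pow_mul_choose_mul_catalan n)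
  have hi : i ≤ n := mem_range_succ_iff.1 hi
  rw [show n + 1 - 1 - i = n - i by omega, show n + 1 - (n - i) - 1 = i by omega]
end

section
/- For every even integer r ≥ 2, the maximum value of T_r on [0,1] is r²/(2r² − 2). -/
/-!
For even `r = 2k` one has `φ(r y) ≤ k - r φ(y)`: modulo `ℤ`, `r y ≡ ± r φ(y)` with
`0 ≤ r φ(y) ≤ k`, and `k` is an integer. Hence each pair of consecutive terms satisfies
`φ(r^{2k} x) / r^{2k} + φ(r^{2k+1} x) / r^{2k+1} ≤ 1 / (2 r^{2k})`, and summing gives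
`T_r ≤ r² / (2r² - 2)`. Equality holds at `x₀ = r / (2(r+1))`: there `r x₀ = k - x₀`, so
`φ(r^n x₀) = x₀` for every `n` and `T_r(x₀) = x₀ r / (r - 1)`.
-/

/-- Distance from `x` to the nearest integer. -/
noncomputable def distInt (x : ℝ) : ℝ := |x - round x|

/-- The Takagi–van der Waerden function `T_r`. -/
noncomputable def takagi (r : ℕ) (x : ℝ) : ℝ :=
  ∑' n : ℕ, distInt ((r : ℝ) ^ n * x) / (r : ℝ) ^ n

lemma distInt_nonneg (x : ℝ) : 0 ≤ distInt x := abs_nonneg _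

lemma distInt_le_half (x : ℝ) : distInt x ≤ 1 / 2 := abs_sub_round x

lemma distInt_le_abs_sub_intCast (x : ℝ) (n : ℤ) : distInt x ≤ |x - n| := round_le x n

lemma distInt_add_intCast (x : ℝ) (m : ℤ) : distInt (x + m) = distInt x := by
  rw [distInt, distInt, round_add_intCast, Int.cast_add, add_sub_add_right_eq_sub]

lemma distInt_neg (x : ℝ) : distInt (-x) = distInt x := by
  have h : ∀ y : ℝ, distInt (-y) ≤ distInt y := fun y => by
    simpa [distInt, abs_sub_comm, neg_add_eq_sub] using distInt_le_abs_sub_intCast (-y) (-round y)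
  exact le_antisymm (h x) (by simpa using h (-x))

lemma distInt_of_nonneg_of_lt_half {x : ℝ} (h0 : 0 ≤ x) (h1 : x < 1 / 2) :
    distInt x = x := by
  rw [distInt, round_eq_zero_iff.2 ⟨by linarith, h1⟩, Int.cast_zero, sub_zero, abs_of_nonneg h0]

lemma distInt_intCast_mul_distInt (m : ℤ) (y : ℝ) :
    distInt (m * distInt y) = distInt (m * y) := by
  have hy : (m : ℝ) * y = m * (y - round y) + ((m * round y : ℤ) : ℝ) := by push_cast; ring
  rw [hy, distInt_add_intCast]
  rcases abs_choice (y - round y) with h | h <;> rw [show distInt y = |y - round y| from rfl, h]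
  rw [mul_neg, distInt_neg]

lemma distInt_natCast_mul_distInt (r : ℕ) (y : ℝ) :
    distInt (r * distInt y) = distInt (r * y) := by
  exact_mod_cast distInt_intCast_mul_distInt r y

lemma distInt_mul_le_of_even {r : ℕ} (hre : Even r) (y : ℝ) :
    distInt (r * y) ≤ r / 2 - r * distInt y := by
  obtain ⟨k, hk⟩ := hre
  have hhalf : (r : ℝ) / 2 = (k : ℤ) := by rw [hk]; push_cast; ring
  have hle : (r : ℝ) * distInt y ≤ r * (1 / 2) :=
    mul_le_mul_of_nonneg_left (distInt_le_half y) r.cast_nonneg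
  calc distInt (r * y) = distInt (r * distInt y) := (distInt_natCast_mul_distInt r y).symm
    _ ≤ |r * distInt y - (k : ℤ)| := distInt_le_abs_sub_intCast _ _
    _ = r / 2 - r * distInt y := by rw [← hhalf, abs_of_nonpos (by linarith)]; ring

lemma distInt_add_distInt_mul_div_le_half {r : ℕ} (hre : Even r) (y : ℝ) :
    distInt y + distInt (r * y) / r ≤ 1 / 2 := by
  rcases Nat.eq_zero_or_pos r with rfl | hr
  · simpa using distInt_le_half y
  have hr' : (0 : ℝ) < r := by exact_mod_cast hr
  have hkey := distInt_mul_le_of_even hre y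
  rw [← le_sub_iff_add_le', div_le_iff₀ hr']
  linarith

lemma summable_distInt_pow_mul_div_pow {r : ℕ} (hr : 1 < r) (x : ℝ) :
    Summable fun n : ℕ => distInt ((r : ℝ) ^ n * x) / (r : ℝ) ^ n := by
  have hr' : (1 : ℝ) < r := by exact_mod_cast hr
  refine .of_nonneg_of_le (fun n => div_nonneg (distInt_nonneg _) (by positivity))
    (fun n => ?_) ((summable_geometric_of_lt_one (by positivity)
      ((inv_lt_one₀ (by positivity)).2 hr')).mul_left (1 / 2))
  rw [inv_pow, ← div_eq_mul_inv]
  gcongr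
  exact distInt_le_half _

lemma distInt_pow_mul_div_pow_add_succ_le {r : ℕ} (hre : Even r) (x : ℝ) (k : ℕ) :
    distInt ((r : ℝ) ^ (2 * k) * x) / (r : ℝ) ^ (2 * k)
        + distInt ((r : ℝ) ^ (2 * k + 1) * x) / (r : ℝ) ^ (2 * k + 1)
      ≤ 1 / 2 * ((r : ℝ) ^ 2)⁻¹ ^ k := by
  set y := (r : ℝ) ^ (2 * k) * x
  have hsucc : (r : ℝ) ^ (2 * k + 1) * x = r * y := by ring
  calc distInt y / (r : ℝ) ^ (2 * k) + distInt ((r : ℝ) ^ (2 * k + 1) * x) / (r : ℝ) ^ (2 * k + 1)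
      = (distInt y + distInt (r * y) / r) / (r : ℝ) ^ (2 * k) := by
        rw [hsucc, pow_succ', add_div, div_div]
    _ ≤ 1 / 2 / (r : ℝ) ^ (2 * k) := by
        gcongr; exact distInt_add_distInt_mul_div_le_half hre y
    _ = 1 / 2 * ((r : ℝ) ^ 2)⁻¹ ^ k := by rw [pow_mul, inv_pow, div_eq_mul_inv]

lemma takagi_le {r : ℕ} (hr : 1 < r) (hre : Even r) (x : ℝ) :
    takagi r x ≤ (r : ℝ) ^ 2 / (2 * (r : ℝ) ^ 2 - 2) := by
  have hr' : (1 : ℝ) < r := by exact_mod_cast hr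
  have hr2 : (1 : ℝ) < (r : ℝ) ^ 2 := by nlinarith
  set f := fun n : ℕ => distInt ((r : ℝ) ^ n * x) / (r : ℝ) ^ n
  have hf := summable_distInt_pow_mul_div_pow hr x
  have heven : Summable fun k => f (2 * k) := hf.comp_injective (mul_right_injective₀ two_ne_zero)
  have hodd : Summable fun k => f (2 * k + 1) :=
    hf.comp_injective ((add_left_injective 1).comp (mul_right_injective₀ two_ne_zero))
  calc takagi r x = ∑' k, (f (2 * k) + f (2 * k + 1)) := by
        rw [heven.tsum_add hodd, tsum_even_add_odd heven hodd]; rfl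
    _ ≤ ∑' k : ℕ, 1 / 2 * ((r : ℝ) ^ 2)⁻¹ ^ k :=
        (heven.add hodd).tsum_le_tsum (distInt_pow_mul_div_pow_add_succ_le hre x)
          ((summable_geometric_of_lt_one (by positivity) (inv_lt_one_of_one_lt₀ hr2)).mul_left _)
    _ = (r : ℝ) ^ 2 / (2 * (r : ℝ) ^ 2 - 2) := by
        rw [tsum_mul_left, tsum_geometric_of_lt_one (by positivity) (inv_lt_one_of_one_lt₀ hr2)]
        field_simp

lemma distInt_pow_mul_eq_of_even {r : ℕ} (hre : Even r) (n : ℕ) :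
    distInt ((r : ℝ) ^ n * (r / (2 * (r + 1)))) = r / (2 * (r + 1)) := by
  set x₀ : ℝ := r / (2 * (r + 1))
  have hx₀ : distInt x₀ = x₀ :=
    distInt_of_nonneg_of_lt_half (by positivity) (by rw [div_lt_iff₀ (by positivity)]; linarith)
  obtain ⟨k, hk⟩ := hre
  have hrx₀ : (r : ℝ) * x₀ = -x₀ + (k : ℤ) := by
    simp only [x₀, hk, Int.cast_natCast, Nat.cast_add]
    field_simp
    ring
  induction n with
  | zero => simpa using hx₀
  | succ n ih =>
    rw [pow_succ', mul_assoc, ← distInt_natCast_mul_distInt, ih, hrx₀, distInt_add_intCast,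
      distInt_neg, hx₀]

lemma takagi_div_two_mul_add_one {r : ℕ} (hr : 1 < r) (hre : Even r) :
    takagi r (r / (2 * (r + 1))) = (r : ℝ) ^ 2 / (2 * (r : ℝ) ^ 2 - 2) := by
  have hr' : (1 : ℝ) < r := by exact_mod_cast hr
  have hterm (n : ℕ) : distInt ((r : ℝ) ^ n * (r / (2 * (r + 1)))) / (r : ℝ) ^ n
      = r / (2 * (r + 1)) * (r : ℝ)⁻¹ ^ n := by
    rw [distInt_pow_mul_eq_of_even hre, inv_pow, div_eq_mul_inv]
  rw [takagi, tsum_congr hterm, tsum_mul_left,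
    tsum_geometric_of_lt_one (by positivity) (inv_lt_one_of_one_lt₀ hr')]
  have : (r : ℝ) - 1 ≠ 0 := by linarith
  have : (r : ℝ) ^ 2 - 1 ≠ 0 := by nlinarith
  field_simp
  ring

/-- For every even integer `r ≥ 2`, the maximum value of `T_r` on `[0,1]`
is `r² / (2r² − 2)`. -/
theorem takagi_max (r : ℕ) (hr : 2 ≤ r) (hre : Even r) :
    IsGreatest (takagi r '' Set.Icc (0 : ℝ) 1)
      ((r : ℝ) ^ 2 / (2 * (r : ℝ) ^ 2 - 2)) := by
  have hx₀ : (r : ℝ) / (2 * (r + 1)) ∈ Set.Icc (0 : ℝ) 1 :=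
    ⟨by positivity, by rw [div_le_one (by positivity)]; linarith⟩
  refine ⟨⟨_, hx₀, takagi_div_two_mul_add_one hr hre⟩, ?_⟩
  rintro _ ⟨x, -, rfl⟩
  exact takagi_le hr hre x
end

section
/- For r = 2 and every integer m ≥ 1, the number of binary strings ε₁⋯ε_{2m} ∈ {0,1}^{2m} such that D_j ≥ 0 for all 1 ≤ j ≤ 2m, D_{2m} = 0, and ε_j = 1 whenever D_j = 0 (j ≤ 2m), equals the Catalan number C_m, where D_j := #{i ≤ j : ε_i = 0} − #{i ≤ j : ε_i = 1}. -/
open scoped Classical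

/-- For a binary string `ε` of length `N`, `D2 ε j` is
`#{i ≤ j : ε_i = 0} − #{i ≤ j : ε_i = 1}` over the first `j` entries. -/
def D2 {N : ℕ} (ε : Fin N → Fin 2) (j : ℕ) : ℤ :=
  ((Finset.univ.filter fun i : Fin N => (i : ℕ) < j ∧ ε i = 0).card : ℤ) -
    ((Finset.univ.filter fun i : Fin N => (i : ℕ) < j ∧ ε i = 1).card : ℤ)

/-- `ε` encodes a leading hump of order `m`: `D_j ≥ 0` for all `j ≤ 2m`,
`D_{2m} = 0`, and `ε_j = 1` whenever `D_j = 0`. -/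
def IsLeadingHump (m : ℕ) (ε : Fin (2 * m) → Fin 2) : Prop :=
  (∀ j, 1 ≤ j → j ≤ 2 * m → 0 ≤ D2 ε j) ∧ D2 ε (2 * m) = 0 ∧
    ∀ j (hj : 1 ≤ j) (hj' : j ≤ 2 * m), D2 ε j = 0 → ε ⟨j - 1, by omega⟩ = 1

/-- `Ĥ²_{m,n}`: the set of binary strings of length `2m` encoding leading
humps of order `m` and generation `n`. -/
noncomputable def H2 (m n : ℕ) : Finset (Fin (2 * m) → Fin 2) :=
  Finset.univ.filter fun ε => IsLeadingHump m ε ∧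
    ((Finset.Icc 1 (2 * m)).filter fun j => D2 ε j = 0).card = n

/-!
The third condition in `IsLeadingHump` is implied by the first: if `D_j = 0` and `ε_j = 0`, the
walk was at height `-1` one step earlier. Reading `0` as an up-step and `1` as a down-step, a
leading hump of order `m` is therefore exactly a Dyck word of semilength `m`, and these are counted
by the Catalan number `C_m`.
-/

open Finset DyckStep

theorem List.count_take_ofFn {α : Type*} [DecidableEq α] {N : ℕ} (f : Fin N → α) (a : α)
    (j : ℕ) : ((List.ofFn f).take j).count a = #{i : Fin N | (i : ℕ) < j ∧ f i = a} := by
  induction N generalizing j with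
  | zero => simp
  | succ N ih =>
    cases j with
    | zero => simp
    | succ j =>
      rw [List.ofFn_succ, List.take_succ_cons, List.count_cons, ih, Fin.card_filter_univ_succ']
      simp [add_comm]

def stepEquiv : Fin 2 ≃ DyckStep where
  toFun := ![U, D]
  invFun
    | U => 0
    | D => 1
  left_inv := by decide
  right_inv s := by cases s <;> rfl

theorem stepEquiv_eq_U_iff (x : Fin 2) : stepEquiv x = U ↔ x = 0 := by revert x; decide

theorem stepEquiv_eq_D_iff (x : Fin 2) : stepEquiv x = D ↔ x = 1 := by revert x; decide

def toSteps {N : ℕ} (ε : Fin N → Fin 2) : List DyckStep :=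
  List.ofFn (stepEquiv ∘ ε)

def ofSteps {N : ℕ} (l : List DyckStep) (hl : l.length = N) : Fin N → Fin 2 :=
  fun i => stepEquiv.symm (l[i]'(hl ▸ i.2))

section Steps

variable {N : ℕ}

@[simp]
theorem length_toSteps (ε : Fin N → Fin 2) : (toSteps ε).length = N :=
  List.length_ofFn

theorem toSteps_ofSteps (l : List DyckStep) (hl : l.length = N) : toSteps (ofSteps l hl) = l :=
  List.ext_getElem (by simp [hl]) fun i _ _ => by simp [toSteps, ofSteps]

theorem ofSteps_toSteps (ε : Fin N → Fin 2) : ofSteps (toSteps ε) (length_toSteps ε) = ε :=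
  funext fun i => by simp [toSteps, ofSteps]

theorem D2_eq_count_sub_count (ε : Fin N → Fin 2) (j : ℕ) :
    D2 ε j = ((toSteps ε).take j).count U - ((toSteps ε).take j).count D := by
  simp only [D2, toSteps, List.count_take_ofFn, Function.comp_apply, stepEquiv_eq_U_iff,
    stepEquiv_eq_D_iff]

theorem D2_zero (ε : Fin N → Fin 2) : D2 ε 0 = 0 := by
  simp [D2_eq_count_sub_count]

theorem D2_of_le (ε : Fin N → Fin 2) {j : ℕ} (hj : N ≤ j) : D2 ε j = D2 ε N := by
  have hlen : (toSteps ε).length ≤ j := by rwa [length_toSteps]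
  simp only [D2_eq_count_sub_count, List.take_of_length_le hlen,
    List.take_of_length_le (length_toSteps ε).le]

theorem D2_succ (ε : Fin N → Fin 2) (j : ℕ) (hj : j < N) :
    D2 ε (j + 1) = D2 ε j + if ε ⟨j, hj⟩ = 0 then 1 else -1 := by
  have hstep : (toSteps ε)[j]? = some (stepEquiv (ε ⟨j, hj⟩)) := by simp [toSteps, hj]
  rw [D2_eq_count_sub_count, D2_eq_count_sub_count, List.take_add_one, hstep]
  generalize ε ⟨j, hj⟩ = x
  fin_cases x <;> simp [stepEquiv] <;> ring

end Steps

section LeadingHump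

variable {m : ℕ} {ε : Fin (2 * m) → Fin 2}

theorem isLeadingHump_iff_forall_D2_nonneg :
    IsLeadingHump m ε ↔ (∀ j, 0 ≤ D2 ε j) ∧ D2 ε (2 * m) = 0 := by
  constructor
  · rintro ⟨hnonneg, hend, -⟩
    refine ⟨fun j => ?_, hend⟩
    rcases Nat.eq_zero_or_pos j with rfl | hpos
    · exact (D2_zero ε).ge
    · rcases le_or_gt j (2 * m) with hj | hj
      · exact hnonneg j hpos hj
      · exact (D2_of_le ε hj.le).symm ▸ hend.ge
  · rintro ⟨hnonneg, hend⟩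
    refine ⟨fun j _ _ => hnonneg j, hend, fun j hj hj' hzero => ?_⟩
    obtain ⟨k, rfl⟩ : ∃ k, j = k + 1 := ⟨j - 1, by omega⟩
    have hup : ε ⟨k, by omega⟩ ≠ 0 := fun h0 => by
      have := hnonneg k
      rw [D2_succ ε k (by omega), if_pos h0] at hzero
      omega
    simpa using Fin.eq_one_of_ne_zero _ hup

theorem isLeadingHump_iff_count_toSteps :
    IsLeadingHump m ε ↔ (toSteps ε).count U = (toSteps ε).count D ∧
      ∀ i, ((toSteps ε).take i).count D ≤ ((toSteps ε).take i).count U := by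
  rw [isLeadingHump_iff_forall_D2_nonneg, and_comm]
  simp only [D2_eq_count_sub_count, List.take_of_length_le ((length_toSteps ε).le),
    sub_nonneg, sub_eq_zero, Nat.cast_le, Nat.cast_inj]

def IsLeadingHump.toDyckWord (h : IsLeadingHump m ε) : DyckWord where
  toList := toSteps ε
  count_U_eq_count_D := (isLeadingHump_iff_count_toSteps.mp h).1
  count_D_le_count_U := (isLeadingHump_iff_count_toSteps.mp h).2

theorem IsLeadingHump.semilength_toDyckWord (h : IsLeadingHump m ε) :
    h.toDyckWord.semilength = m := by
  have : 2 * h.toDyckWord.semilength = 2 * m :=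
    h.toDyckWord.two_mul_semilength_eq_length.trans (length_toSteps ε)
  omega

theorem isLeadingHump_ofSteps (p : DyckWord) (hp : p.toList.length = 2 * m) :
    IsLeadingHump m (ofSteps p.toList hp) :=
  isLeadingHump_iff_count_toSteps.mpr <| by
    rw [toSteps_ofSteps]
    exact ⟨p.count_U_eq_count_D, p.count_D_le_count_U⟩

end LeadingHump

theorem DyckWord.length_eq_of_semilength_eq {p : DyckWord} {m : ℕ} (hp : p.semilength = m) :
    p.toList.length = 2 * m := by
  rw [← p.two_mul_semilength_eq_length, hp]

def leadingHumpEquivDyckWord (m : ℕ) :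
    {ε : Fin (2 * m) → Fin 2 // IsLeadingHump m ε} ≃ {p : DyckWord // p.semilength = m} where
  toFun ε := ⟨ε.2.toDyckWord, ε.2.semilength_toDyckWord⟩
  invFun p := ⟨_, isLeadingHump_ofSteps p.1 (p.1.length_eq_of_semilength_eq p.2)⟩
  left_inv ε := Subtype.ext (ofSteps_toSteps ε.1)
  right_inv p :=
    Subtype.ext <| DyckWord.ext <| toSteps_ofSteps _ (p.1.length_eq_of_semilength_eq p.2)

theorem card_leading_humps_eq_catalan_general (m : ℕ) :
    (Finset.univ.filter fun ε : Fin (2 * m) → Fin 2 =>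
        IsLeadingHump m ε).card = catalan m := by
  rw [← Fintype.card_subtype, Fintype.card_congr (leadingHumpEquivDyckWord m),
    DyckWord.card_dyckWord_semilength_eq_catalan]

/-- For every `m ≥ 1`, the number of binary strings of length `2m` with
`D_j ≥ 0` for all `j ≤ 2m`, `D_{2m} = 0`, and `ε_j = 1` whenever `D_j = 0`
(i.e. leading humps of order `m`), equals the Catalan number `C_m`. -/
theorem card_leading_humps_eq_catalan (m : ℕ) (hm : 1 ≤ m) :
    (Finset.univ.filter fun ε : Fin (2 * m) → Fin 2 =>
        IsLeadingHump m ε).card = catalan m :=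
  card_leading_humps_eq_catalan_general m
end

section
/- For every even integer r ≥ 2 and all m, n ≥ 1, card(Ĥ^r_{m,n}) = (r/2)^{2m−n} · card(Ĥ²_{m,n}). -/
open scoped Classical

/-- For a string `ε` of length `N` over `{0, …, r−1}`, `Dr ε j` is
`#{i ≤ j : ε_i < r/2} − #{i ≤ j : ε_i ≥ r/2}` over the first `j` entries. -/
def Dr {r N : ℕ} (ε : Fin N → Fin r) (j : ℕ) : ℤ :=
  ((Finset.univ.filter fun i : Fin N => (i : ℕ) < j ∧ 2 * (ε i : ℕ) < r).card : ℤ) -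
    ((Finset.univ.filter fun i : Fin N => (i : ℕ) < j ∧ r ≤ 2 * (ε i : ℕ)).card : ℤ)

/-- `Ĥ^r_{m,n}`: strings `ε₁⋯ε_{2m}` over `{0, …, r−1}` with `D_j ≥ 0` for
all `j ≤ 2m`, `D_{2m} = 0`, `ε_j = r/2` whenever `D_j = 0`, and exactly `n`
indices `j` with `D_j = 0`. -/
noncomputable def Hr (r m n : ℕ) : Finset (Fin (2 * m) → Fin r) :=
  Finset.univ.filter fun ε =>
    (∀ j, 1 ≤ j → j ≤ 2 * m → 0 ≤ Dr ε j) ∧ Dr ε (2 * m) = 0 ∧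
    (∀ j (hj : 1 ≤ j) (hj' : j ≤ 2 * m), Dr ε j = 0 →
      2 * ((ε ⟨j - 1, by omega⟩ : ℕ)) = r) ∧
    ((Finset.Icc 1 (2 * m)).filter fun j => Dr ε j = 0).card = n

/-! Thresholding every letter at `r / 2` (`halfBit`) leaves the walk `D` unchanged, so it maps
`Ĥ^r_{m,n}` onto `Ĥ²_{m,n}`. Over a binary hump `δ`, the letter at each of the `n` returns to zero
must be `r / 2`, while each of the other `2m - n` letters ranges freely over the `r / 2` letters of
the half prescribed by `δ`. -/

open Finset

def halfBit {r : ℕ} (v : Fin r) : Fin 2 := if 2 * (v : ℕ) < r then 0 else 1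

lemma halfBit_eq_zero_iff {r : ℕ} (v : Fin r) : halfBit v = 0 ↔ 2 * (v : ℕ) < r := by
  unfold halfBit; split_ifs with h <;> simp [h]

lemma halfBit_eq_one_iff {r : ℕ} (v : Fin r) : halfBit v = 1 ↔ r ≤ 2 * (v : ℕ) := by
  unfold halfBit; split_ifs with h <;> simp [h]; omega

lemma Dr_eq_D2_comp_halfBit {r N : ℕ} (ε : Fin N → Fin r) : Dr ε = D2 (halfBit ∘ ε) := by
  ext j
  simp only [Dr, D2, Function.comp_apply, halfBit_eq_zero_iff, halfBit_eq_one_iff]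

lemma card_filter_halfBit_eq {r : ℕ} (hr : Even r) (b : Fin 2) :
    #{v : Fin r | halfBit v = b} = r / 2 := by
  obtain ⟨k, rfl⟩ := hr
  have hlower : #{v : Fin (k + k) | halfBit v = 0} = k := by
    rw [filter_congr (q := fun v : Fin (k + k) => (v : ℕ) < k) fun v _ => by
      rw [halfBit_eq_zero_iff]; omega, Fin.card_filter_val_lt]
    omega
  have hsplit := card_filter_add_card_filter_not (s := univ) fun v : Fin (k + k) => halfBit v = 0
  rw [show (k + k) / 2 = k by omega]
  match b with
  | 0 => exact hlower
  | 1 =>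
    rw [card_univ, Fintype.card_fin, hlower] at hsplit
    rw [filter_congr (q := fun v : Fin (k + k) => ¬halfBit v = 0) fun v _ => by
      rw [halfBit_eq_one_iff, halfBit_eq_zero_iff]; omega]
    omega

lemma card_filter_two_mul_val_eq_one {r : ℕ} (hr : Even r) (h0 : 0 < r) :
    #{v : Fin r | 2 * (v : ℕ) = r} = 1 := by
  obtain ⟨k, rfl⟩ := hr
  refine card_eq_one.2 ⟨⟨k, by omega⟩, ?_⟩
  ext v
  simp only [mem_filter, mem_univ, true_and, mem_singleton, Fin.ext_iff]
  omega

/-- `i ∈ returns δ` when the walk `D2 δ` is back at zero after step `i + 1`: returns are indexed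
by the 0-based position of the returning letter. -/
def returns {N : ℕ} (δ : Fin N → Fin 2) : Finset (Fin N) := {i | D2 δ (i + 1) = 0}

lemma mem_returns {N : ℕ} {δ : Fin N → Fin 2} {i : Fin N} :
    i ∈ returns δ ↔ D2 δ (i + 1) = 0 := by
  simp [returns]

lemma forall_returns_iff {N : ℕ} (δ : Fin N → Fin 2) (P : Fin N → Prop) :
    (∀ j (hj : 1 ≤ j) (hj' : j ≤ N), D2 δ j = 0 → P ⟨j - 1, by omega⟩) ↔
      ∀ i ∈ returns δ, P i := by
  constructor
  · intro h i hi
    simpa using h (i + 1) (by omega) i.isLt (mem_returns.1 hi)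
  · intro h j hj hj' hD
    exact h _ (mem_returns.2 (by rwa [Nat.sub_add_cancel hj]))

lemma card_returns {N : ℕ} (δ : Fin N → Fin 2) :
    #(returns δ) = #{j ∈ Icc 1 N | D2 δ j = 0} := by
  refine card_bij (fun i _ => (i : ℕ) + 1) ?_ ?_ ?_
  · intro i hi
    exact mem_filter.2 ⟨mem_Icc.2 ⟨by omega, i.isLt⟩, mem_returns.1 hi⟩
  · intro i _ i' _ h
    exact Fin.ext (by omega)
  · intro j hj
    simp only [mem_filter, mem_Icc] at hj
    refine ⟨⟨j - 1, by omega⟩, mem_returns.2 ?_, by simp only; omega⟩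
    rw [Nat.sub_add_cancel hj.1.1]
    exact hj.2

lemma mem_H2_iff {m n : ℕ} (δ : Fin (2 * m) → Fin 2) :
    δ ∈ H2 m n ↔ ((∀ j, 1 ≤ j → j ≤ 2 * m → 0 ≤ D2 δ j) ∧ D2 δ (2 * m) = 0 ∧
      ∀ i ∈ returns δ, δ i = 1) ∧ #(returns δ) = n := by
  rw [H2, mem_filter, IsLeadingHump, card_returns, forall_returns_iff δ (δ · = 1)]
  exact and_iff_right (mem_univ δ)

lemma mem_Hr_iff {r m n : ℕ} (ε : Fin (2 * m) → Fin r) :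
    ε ∈ Hr r m n ↔ halfBit ∘ ε ∈ H2 m n ∧ ∀ i ∈ returns (halfBit ∘ ε), 2 * (ε i : ℕ) = r := by
  simp only [Hr, mem_filter, mem_univ, true_and, Dr_eq_D2_comp_halfBit, mem_H2_iff,
    ← card_returns]
  rw [forall_returns_iff (halfBit ∘ ε) (fun i => 2 * (ε i : ℕ) = r)]
  have hmid : ∀ i, 2 * (ε i : ℕ) = r → (halfBit ∘ ε) i = 1 := fun i h => by
    simp [halfBit_eq_one_iff, h]
  grind

lemma filter_Hr_halfBit_eq {r m n : ℕ} {δ : Fin (2 * m) → Fin 2} (hδ : δ ∈ H2 m n) :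
    {ε ∈ Hr r m n | halfBit ∘ ε = δ} =
      Fintype.piFinset fun i => {v | halfBit v = δ i ∧ (i ∈ returns δ → 2 * (v : ℕ) = r)} := by
  ext ε
  simp only [mem_filter, mem_Hr_iff, Fintype.mem_piFinset, mem_univ, true_and]
  constructor
  · rintro ⟨⟨-, hret⟩, rfl⟩
    exact fun i => ⟨rfl, hret i⟩
  · intro h
    obtain rfl : halfBit ∘ ε = δ := funext fun i => (h i).1
    exact ⟨⟨hδ, fun i hi => (h i).2 hi⟩, rfl⟩

lemma card_filter_Hr_halfBit_eq {r m n : ℕ} (hr : Even r) (h0 : 0 < r)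
    {δ : Fin (2 * m) → Fin 2} (hδ : δ ∈ H2 m n) :
    #{ε ∈ Hr r m n | halfBit ∘ ε = δ} = (r / 2) ^ (2 * m - n) := by
  obtain ⟨⟨-, -, hret⟩, hcard⟩ := (mem_H2_iff δ).1 hδ
  have hfibre : ∀ i, #{v : Fin r | halfBit v = δ i ∧ (i ∈ returns δ → 2 * (v : ℕ) = r)} =
      if i ∈ returns δ then 1 else r / 2 := by
    intro i
    split_ifs with hi
    · have hδi : δ i = 1 := hret i hi
      rw [← card_filter_two_mul_val_eq_one hr h0]
      congr 1
      ext v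
      simp only [mem_filter, mem_univ, true_and, hi, hδi, halfBit_eq_one_iff, forall_const]
      exact ⟨fun h => h.2, fun h => ⟨h.ge, h⟩⟩
    · simp only [hi, false_imp_iff, and_true, card_filter_halfBit_eq hr]
  rw [filter_Hr_halfBit_eq hδ, Fintype.card_piFinset, prod_congr rfl fun i _ => hfibre i,
    prod_ite, prod_const_one, prod_const, one_mul, filter_notMem_eq_sdiff,
    card_sdiff_of_subset (subset_univ _), card_univ, Fintype.card_fin, hcard]

theorem card_Hr_eq_general (r m n : ℕ) (hr : 2 ≤ r) (hre : Even r) :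
    (Hr r m n).card = (r / 2) ^ (2 * m - n) * (H2 m n).card := by
  have hmaps : ∀ ε ∈ Hr r m n, halfBit ∘ ε ∈ H2 m n := fun ε hε => ((mem_Hr_iff ε).1 hε).1
  rw [card_eq_sum_card_fiberwise hmaps,
    sum_congr rfl fun δ hδ => card_filter_Hr_halfBit_eq hre (by omega) hδ,
    sum_const, smul_eq_mul, mul_comm]

/-- For every even `r ≥ 2` and all `m, n ≥ 1`,
`card(Ĥ^r_{m,n}) = (r/2)^{2m−n} · card(Ĥ²_{m,n})`. -/
theorem card_Hr_eq (r m n : ℕ) (hr : 2 ≤ r) (hre : Even r)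
    (hm : 1 ≤ m) (hn : 1 ≤ n) :
    (Hr r m n).card = (r / 2) ^ (2 * m - n) * (H2 m n).card :=
  card_Hr_eq_general r m n hr hre
end
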